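/- Let Ω ⊆ ℝ^n be a nonempty open set, q > 1, and let f : ℝ^n → ℝ be a C¹ function together with constants a, b > 0 such that ‖∇f‖ ≤ a on Ω and such that for every nonnegative smooth function φ : ℝ^n → ℝ with compact support contained in Ω one has -∫_Ω ‖∇f‖^{q-2} ⟨∇f, ∇φ⟩ dx ≥ b ∫_Ω φ dx. Then for every p > 1 and every smooth function v : ℝ^n → ℝ with compact support contained in Ω one has (b^p / (p^p a^{p(q-1)})) ∫_Ω |v|^p dx ≤ ∫_Ω ‖∇v‖^p dx. -/

import Mathlib

/-!
Testing the weak inequality `Δ_q f ≥ b` against `φ ≥ 0` and using `‖∇f‖^{q-1} ≤ a^{q-1}` gives the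
`L¹` bound `h ∫ φ ≤ ∫ ‖∇φ‖` with `h = b / a^{q-1}`, i.e. `λ_{1,1}(Ω) ≥ h`. The `L^p` bound
`(h/p)^p ∫ |v|^p ≤ ∫ ‖∇v‖^p` follows by testing with `φ = w^p - ε^p`, `w = √(v² + ε²)`, a smooth
substitute for `|v|^p`: then `‖∇φ‖ ≤ p w^{p-1} ‖∇v‖`, Young's inequality with weight `h/p` absorbs
`w^{p-1} ‖∇v‖` into `∫ w^p` and `∫ ‖∇v‖^p`, and `ε → 0` removes the error `ε^p |supp v|`.
-/

open MeasureTheory Real RealInnerProductSpace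

theorem young_inequality_rpow_sub_one {p u y : ℝ} (hp : 1 < p) (hu : 0 ≤ u) (hy : 0 ≤ y) :
    p * (u ^ (p - 1) * y) ≤ (p - 1) * u ^ p + y ^ p := by
  have hpq : (p / (p - 1)).HolderConjugate p :=
    ((holderConjugate_iff_eq_conjExponent hp).mpr rfl).symm
  have hu' : (u ^ (p - 1)) ^ (p / (p - 1)) = u ^ p := by
    rw [← rpow_mul hu, mul_div_cancel₀ _ (by linarith)]
  have hyoung := young_inequality_of_nonneg (rpow_nonneg hu (p - 1)) hy hpq
  rw [hu'] at hyoung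
  calc p * (u ^ (p - 1) * y) ≤ p * (u ^ p / (p / (p - 1)) + y ^ p / p) := by gcongr
    _ = (p - 1) * u ^ p + y ^ p := by field_simp

theorem abs_rpow_sub_two_mul_inner_le {E : Type*} [NormedAddCommGroup E] [InnerProductSpace ℝ E]
    {q a : ℝ} (hq : 1 < q) {ξ : E} (hξ : ‖ξ‖ ≤ a) (η : E) :
    |‖ξ‖ ^ (q - 2) * ⟪ξ, η⟫| ≤ a ^ (q - 1) * ‖η‖ :=
  calc |‖ξ‖ ^ (q - 2) * ⟪ξ, η⟫| ≤ ‖ξ‖ ^ (q - 2) * (‖ξ‖ * ‖η‖) := by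
        rw [abs_mul, abs_of_nonneg (by positivity)]
        gcongr
        exact abs_real_inner_le_norm ξ η
    _ = ‖ξ‖ ^ (q - 1) * ‖η‖ := by
        rw [← mul_assoc, ← rpow_add_one' (norm_nonneg ξ) (by linarith)]
        ring_nf
    _ ≤ a ^ (q - 1) * ‖η‖ := by gcongr

theorem hasDerivAt_sqrt_sq_add_sq_rpow_sub {ε : ℝ} (hε : ε ≠ 0) (p t : ℝ) :
    HasDerivAt (fun t => √(t ^ 2 + ε ^ 2) ^ p - ε ^ p)
      (p * √(t ^ 2 + ε ^ 2) ^ (p - 1) * (t / √(t ^ 2 + ε ^ 2))) t := by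
  have hpos : 0 < t ^ 2 + ε ^ 2 := by positivity
  have hsqrt := (((hasDerivAt_pow 2 t).add_const (ε ^ 2)).sqrt hpos.ne').rpow_const
    (p := p) (Or.inl (sqrt_pos.2 hpos).ne')
  refine (hsqrt.sub_const (ε ^ p)).congr_deriv ?_
  norm_num
  field_simp

theorem integral_le_of_le_of_integrable {α : Type*} [MeasurableSpace α] {μ : Measure α}
    {f g : α → ℝ} (hfg : f ≤ g) (hg : Integrable g μ) (hg0 : 0 ≤ g) :
    ∫ x, f x ∂μ ≤ ∫ x, g x ∂μ := by
  by_cases hf : Integrable f μ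
  · exact integral_mono hf hg hfg
  · rw [integral_undef hf]
    exact integral_nonneg hg0

theorem setIntegral_eq_of_subset_of_forall_notMem_eq_zero {α : Type*} [MeasurableSpace α]
    {μ : Measure α} {s t : Set α} {f : α → ℝ} (hst : s ⊆ t) (hf : ∀ x ∉ s, f x = 0) :
    ∫ x in t, f x ∂μ = ∫ x in s, f x ∂μ := by
  rw [setIntegral_eq_integral_of_forall_compl_eq_zero hf,
    setIntegral_eq_integral_of_forall_compl_eq_zero fun x hx => hf x fun h => hx (hst h)]

theorem tsupport_sqrt_sq_add_sq_rpow_sub_subset {X : Type*} [TopologicalSpace X] {v : X → ℝ}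
    {ε : ℝ} (hε : 0 ≤ ε) (p : ℝ) :
    tsupport (fun x => √(v x ^ 2 + ε ^ 2) ^ p - ε ^ p) ⊆ tsupport v := by
  refine closure_minimal (Function.support_subset_iff'.2 fun x hx => ?_) (isClosed_tsupport v)
  simp [image_eq_zero_of_notMem_tsupport hx, sqrt_sq hε]

theorem ContDiff.sqrt_sq_add_sq_rpow_sub {X : Type*} [NormedAddCommGroup X] [NormedSpace ℝ X]
    {n : WithTop ℕ∞} {v : X → ℝ} (hv : ContDiff ℝ n v) {ε : ℝ} (hε : ε ≠ 0) (p : ℝ) :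
    ContDiff ℝ n fun x => √(v x ^ 2 + ε ^ 2) ^ p - ε ^ p :=
  ((((hv.pow 2).add contDiff_const).sqrt fun x => by positivity).rpow_const_of_ne
    fun x => (sqrt_pos.2 (by positivity)).ne').sub contDiff_const

section Gradient

variable {E : Type*} [NormedAddCommGroup E] [InnerProductSpace ℝ E] [CompleteSpace E]

theorem HasDerivAt.comp_hasGradientAt {h : ℝ → ℝ} {h' : ℝ} {v : E → ℝ} {v' : E} {x : E}
    (hh : HasDerivAt h h' (v x)) (hv : HasGradientAt v v' x) :
    HasGradientAt (h ∘ v) (h' • v') x := by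
  rw [hasGradientAt_iff_hasFDerivAt] at hv ⊢
  rw [map_smul]
  exact hh.comp_hasFDerivAt x hv

theorem gradient_eq_zero_of_notMem_tsupport {v : E → ℝ} {x : E} (hx : x ∉ tsupport v) :
    gradient v x = 0 := by
  have hv : v =ᶠ[nhds x] fun _ => 0 := notMem_tsupport_iff_eventuallyEq.mp hx
  rw [hv.gradient_eq, gradient_fun_const]

theorem ContDiff.continuous_gradient {v : E → ℝ} (hv : ContDiff ℝ 1 v) :
    Continuous (gradient v) :=
  (InnerProductSpace.toDual ℝ E).symm.continuous.comp (hv.continuous_fderiv one_ne_zero)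

theorem norm_gradient_sqrt_sq_add_sq_rpow_sub_le {v : E → ℝ} {x : E}
    (hv : DifferentiableAt ℝ v x) {ε p : ℝ} (hε : ε ≠ 0) (hp : 0 ≤ p) :
    ‖gradient (fun y => √(v y ^ 2 + ε ^ 2) ^ p - ε ^ p) x‖
      ≤ p * √(v x ^ 2 + ε ^ 2) ^ (p - 1) * ‖gradient v x‖ := by
  set w := √(v x ^ 2 + ε ^ 2)
  have hw : 0 < w := sqrt_pos.2 (by positivity)
  have hvw : |v x| / w ≤ 1 := div_le_one_of_le₀ (abs_le_sqrt (by nlinarith)) hw.le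
  have hg : HasGradientAt (fun y => √(v y ^ 2 + ε ^ 2) ^ p - ε ^ p) _ x :=
    (hasDerivAt_sqrt_sq_add_sq_rpow_sub hε p (v x)).comp_hasGradientAt hv.hasGradientAt
  rw [hg.gradient, norm_smul, norm_mul, norm_div,
    norm_of_nonneg (by positivity : 0 ≤ p * w ^ (p - 1)), norm_of_nonneg hw.le, Real.norm_eq_abs]
  calc p * w ^ (p - 1) * (|v x| / w) * ‖gradient v x‖
      ≤ p * w ^ (p - 1) * 1 * ‖gradient v x‖ := by gcongr
    _ = p * w ^ (p - 1) * ‖gradient v x‖ := by ring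

theorem rpow_mul_norm_gradient_sqrt_sq_add_sq_rpow_sub_le {v : E → ℝ} {x : E}
    (hv : DifferentiableAt ℝ v x) {ε p s : ℝ} (hε : ε ≠ 0) (hp : 1 < p) (hs : 0 ≤ s) :
    s ^ (p - 1) * ‖gradient (fun y => √(v y ^ 2 + ε ^ 2) ^ p - ε ^ p) x‖
      ≤ (p - 1) * s ^ p * √(v x ^ 2 + ε ^ 2) ^ p + ‖gradient v x‖ ^ p := by
  set w := √(v x ^ 2 + ε ^ 2)
  have hw : 0 ≤ w := sqrt_nonneg _
  calc s ^ (p - 1) * ‖gradient (fun y => √(v y ^ 2 + ε ^ 2) ^ p - ε ^ p) x‖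
      ≤ s ^ (p - 1) * (p * w ^ (p - 1) * ‖gradient v x‖) := by
        gcongr
        exact norm_gradient_sqrt_sq_add_sq_rpow_sub_le hv hε (by linarith)
    _ = p * ((s * w) ^ (p - 1) * ‖gradient v x‖) := by rw [mul_rpow hs hw]; ring
    _ ≤ (p - 1) * (s * w) ^ p + ‖gradient v x‖ ^ p :=
        young_inequality_rpow_sub_one hp (by positivity) (norm_nonneg _)
    _ = (p - 1) * s ^ p * w ^ p + ‖gradient v x‖ ^ p := by rw [mul_rpow hs hw]; ring

end Gradient

section Poincare

variable {E : Type*} [NormedAddCommGroup E] [InnerProductSpace ℝ E] [CompleteSpace E]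
  [MeasurableSpace E] {μ : Measure E} {Ω : Set E}

/-- `h ≤ λ_{1,1}(Ω)`, the first eigenvalue of the `1`-Laplacian (the Cheeger constant of `Ω`),
tested on nonnegative functions. -/
def CheegerBound (μ : Measure E) (Ω : Set E) (h : ℝ) : Prop :=
  ∀ φ : E → ℝ, ContDiff ℝ (⊤ : ℕ∞) φ → HasCompactSupport φ → tsupport φ ⊆ Ω → (∀ x, 0 ≤ φ x) →
    h * ∫ x in Ω, φ x ∂μ ≤ ∫ x in Ω, ‖gradient φ x‖ ∂μ

theorem CheegerBound.mul_setIntegral_le_of_tsupport_subset {h : ℝ} (hΩ : CheegerBound μ Ω h)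
    {K : Set E} (hK : IsCompact K) (hKΩ : K ⊆ Ω) {φ : E → ℝ} (hφ : ContDiff ℝ (⊤ : ℕ∞) φ)
    (hφK : tsupport φ ⊆ K) (hφ0 : ∀ x, 0 ≤ φ x) :
    h * ∫ x in K, φ x ∂μ ≤ ∫ x in K, ‖gradient φ x‖ ∂μ := by
  have hφnotMem : ∀ x ∉ K, x ∉ tsupport φ := fun x hx h => hx (hφK h)
  have := hΩ φ hφ (hK.of_isClosed_subset (isClosed_tsupport φ) hφK) (hφK.trans hKΩ) hφ0
  rwa [setIntegral_eq_of_subset_of_forall_notMem_eq_zero hKΩ fun x hx =>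
      image_eq_zero_of_notMem_tsupport (hφnotMem x hx),
    setIntegral_eq_of_subset_of_forall_notMem_eq_zero hKΩ fun x hx => by
      simp [gradient_eq_zero_of_notMem_tsupport (hφnotMem x hx)]] at this

variable [BorelSpace E] [IsFiniteMeasureOnCompacts μ]

theorem mul_setIntegral_le_mul_setIntegral_norm_gradient {q a b : ℝ} (hq : 1 < q) (ha : 0 ≤ a)
    {f φ : E → ℝ} (hgrad : ∀ x ∈ Ω, ‖gradient f x‖ ≤ a) (hφ : ContDiff ℝ 1 φ)
    (hφK : HasCompactSupport φ) (hφΩ : tsupport φ ⊆ Ω)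
    (hdiv : b * ∫ x in Ω, φ x ∂μ ≤
      -∫ x in Ω, ‖gradient f x‖ ^ (q - 2) * ⟪gradient f x, gradient φ x⟫ ∂μ) :
    b * ∫ x in Ω, φ x ∂μ ≤ a ^ (q - 1) * ∫ x in Ω, ‖gradient φ x‖ ∂μ := by
  have hbound : ∀ x, -(‖gradient f x‖ ^ (q - 2) * ⟪gradient f x, gradient φ x⟫)
      ≤ a ^ (q - 1) * ‖gradient φ x‖ := by
    intro x
    by_cases hx : x ∈ tsupport φ
    · exact (neg_le_abs _).trans (abs_rpow_sub_two_mul_inner_le hq (hgrad x (hφΩ hx)) _)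
    · simp [gradient_eq_zero_of_notMem_tsupport hx]
  have hint : Integrable (fun x => a ^ (q - 1) * ‖gradient φ x‖) (μ.restrict Ω) := by
    refine (Continuous.integrable_of_hasCompactSupport
      (continuous_const.mul hφ.continuous_gradient.norm) ?_).restrict
    exact HasCompactSupport.intro hφK fun x hx => by simp [gradient_eq_zero_of_notMem_tsupport hx]
  rw [← integral_neg] at hdiv
  rw [← integral_const_mul (a ^ (q - 1))]
  exact hdiv.trans (integral_le_of_le_of_integrable hbound hint fun x => by positivity)

theorem rpow_mul_setIntegral_norm_gradient_sqrt_sq_add_sq_rpow_sub_le {K : Set E}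
    (hK : IsCompact K) {v : E → ℝ} (hv : ContDiff ℝ 1 v) {ε p s : ℝ} (hε : ε ≠ 0) (hp : 1 < p)
    (hs : 0 ≤ s) :
    s ^ (p - 1) * ∫ x in K, ‖gradient (fun y => √(v y ^ 2 + ε ^ 2) ^ p - ε ^ p) x‖ ∂μ
      ≤ (p - 1) * s ^ p * ∫ x in K, √(v x ^ 2 + ε ^ 2) ^ p ∂μ
        + ∫ x in K, ‖gradient v x‖ ^ p ∂μ := by
  have hint : ∀ {g : E → ℝ}, Continuous g → IntegrableOn g K μ := fun hg =>
    hg.continuousOn.integrableOn_compact hK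
  have hwp : IntegrableOn (fun x => √(v x ^ 2 + ε ^ 2) ^ p) K μ :=
    hint (((hv.continuous.pow 2).add continuous_const).sqrt.rpow_const fun _ =>
      Or.inr (by linarith))
  have hgv : IntegrableOn (fun x => ‖gradient v x‖ ^ p) K μ :=
    hint (hv.continuous_gradient.norm.rpow_const fun _ => Or.inr (by linarith))
  calc s ^ (p - 1) * ∫ x in K, ‖gradient (fun y => √(v y ^ 2 + ε ^ 2) ^ p - ε ^ p) x‖ ∂μ
      = ∫ x in K, s ^ (p - 1) * ‖gradient (fun y => √(v y ^ 2 + ε ^ 2) ^ p - ε ^ p) x‖ ∂μ :=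
        (integral_const_mul _ _).symm
    _ ≤ ∫ x in K, ((p - 1) * s ^ p * √(v x ^ 2 + ε ^ 2) ^ p + ‖gradient v x‖ ^ p) ∂μ :=
        integral_mono (hint (continuous_const.mul
          (hv.sqrt_sq_add_sq_rpow_sub hε p).continuous_gradient.norm))
          ((hwp.const_mul _).add hgv) fun x =>
          rpow_mul_norm_gradient_sqrt_sq_add_sq_rpow_sub_le (hv.differentiable one_ne_zero x)
            hε hp hs
    _ = _ := by rw [integral_add (hwp.const_mul _) hgv, integral_const_mul]

theorem rpow_mul_setIntegral_abs_rpow_le_add {h p ε : ℝ} (hΩ : CheegerBound μ Ω h) (hh : 0 ≤ h)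
    (hp : 1 < p) (hε : 0 < ε) {v : E → ℝ} (hv : ContDiff ℝ (⊤ : ℕ∞) v) (hvK : HasCompactSupport v)
    (hvΩ : tsupport v ⊆ Ω) :
    (h / p) ^ p * ∫ x in tsupport v, |v x| ^ p ∂μ
      ≤ p * (h / p) ^ p * ε ^ p * μ.real (tsupport v)
        + ∫ x in tsupport v, ‖gradient v x‖ ^ p ∂μ := by
  set K := tsupport v
  set s := h / p
  have hp0 : 0 < p := by linarith
  have hs : 0 ≤ s := by positivity
  have hK : IsCompact K := hvK
  have hint : ∀ {g : E → ℝ}, Continuous g → IntegrableOn g K μ := fun hg =>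
    hg.continuousOn.integrableOn_compact hK
  set w : E → ℝ := fun x => √(v x ^ 2 + ε ^ 2)
  set φ : E → ℝ := fun x => w x ^ p - ε ^ p
  have hwp : Continuous fun x => w x ^ p :=
    (((hv.continuous.pow 2).add continuous_const).sqrt).rpow_const fun _ => Or.inr hp0.le
  have hφ : ContDiff ℝ (⊤ : ℕ∞) φ := hv.sqrt_sq_add_sq_rpow_sub hε.ne' p
  have hφ0 : ∀ x, 0 ≤ φ x := fun x =>
    sub_nonneg.2 (rpow_le_rpow hε.le (le_sqrt_of_sq_le (by nlinarith)) hp0.le)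
  have hcheeger : h * ∫ x in K, φ x ∂μ ≤ ∫ x in K, ‖gradient φ x‖ ∂μ :=
    hΩ.mul_setIntegral_le_of_tsupport_subset hK hvΩ hφ
      (tsupport_sqrt_sq_add_sq_rpow_sub_subset hε.le p) hφ0
  have hφ_int : ∫ x in K, φ x ∂μ = ∫ x in K, w x ^ p ∂μ - ε ^ p * μ.real K := by
    rw [integral_sub (hint hwp) (integrableOn_const hK.measure_lt_top.ne),
      setIntegral_const, smul_eq_mul, mul_comm]
  have hyoung := rpow_mul_setIntegral_norm_gradient_sqrt_sq_add_sq_rpow_sub_le (μ := μ) hK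
    (hv.of_le (by exact_mod_cast le_top)) hε.ne' hp hs
  have habs : ∫ x in K, |v x| ^ p ∂μ ≤ ∫ x in K, w x ^ p ∂μ :=
    integral_mono (hint (hv.continuous.abs.rpow_const fun _ => Or.inr hp0.le)) (hint hwp)
      fun x => rpow_le_rpow (abs_nonneg _) (abs_le_sqrt (by nlinarith)) hp0.le
  have hs_mul : s ^ (p - 1) * h = p * s ^ p := by
    rw [show h = p * s by simp only [s]; field_simp, mul_left_comm,
      ← rpow_add_one' hs (by linarith), sub_add_cancel]
  have key : p * s ^ p * (∫ x in K, w x ^ p ∂μ - ε ^ p * μ.real K)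
      ≤ (p - 1) * s ^ p * ∫ x in K, w x ^ p ∂μ + ∫ x in K, ‖gradient v x‖ ^ p ∂μ :=
    calc p * s ^ p * (∫ x in K, w x ^ p ∂μ - ε ^ p * μ.real K)
        = s ^ (p - 1) * (h * ∫ x in K, φ x ∂μ) := by rw [hφ_int, ← mul_assoc, hs_mul]
      _ ≤ s ^ (p - 1) * ∫ x in K, ‖gradient φ x‖ ∂μ := by gcongr
      _ ≤ _ := hyoung
  have hsp : 0 ≤ s ^ p := by positivity
  linarith [mul_le_mul_of_nonneg_left habs hsp]

theorem rpow_mul_setIntegral_abs_rpow_le {h p : ℝ} (hΩ : CheegerBound μ Ω h) (hh : 0 ≤ h)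
    (hp : 1 < p) {v : E → ℝ} (hv : ContDiff ℝ (⊤ : ℕ∞) v) (hvK : HasCompactSupport v)
    (hvΩ : tsupport v ⊆ Ω) :
    (h / p) ^ p * ∫ x in Ω, |v x| ^ p ∂μ ≤ ∫ x in Ω, ‖gradient v x‖ ^ p ∂μ := by
  have hp0 : 0 < p := by linarith
  rw [setIntegral_eq_of_subset_of_forall_notMem_eq_zero hvΩ fun x hx => by
      simp [image_eq_zero_of_notMem_tsupport hx, zero_rpow hp0.ne'],
    setIntegral_eq_of_subset_of_forall_notMem_eq_zero hvΩ fun x hx => by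
      simp [gradient_eq_zero_of_notMem_tsupport hx, zero_rpow hp0.ne']]
  have hcont : Continuous fun ε : ℝ => p * (h / p) ^ p * ε ^ p * μ.real (tsupport v)
      + ∫ x in tsupport v, ‖gradient v x‖ ^ p ∂μ :=
    ((continuous_const.mul (continuous_rpow_const hp0.le)).mul continuous_const).add
      continuous_const
  have hlim := (hcont.tendsto 0).mono_left (nhdsWithin_le_nhds (s := Set.Ioi 0))
  rw [zero_rpow hp0.ne', mul_zero, zero_mul, zero_add] at hlim
  exact ge_of_tendsto hlim (eventually_nhdsWithin_of_forall fun ε hε =>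
    rpow_mul_setIntegral_abs_rpow_le_add hΩ hh hp hε hv hvK hvΩ)

end Poincare

theorem eigenvalue_lower_bound_gradient_bounded_general {n : ℕ}
    (Ω : Set (EuclideanSpace ℝ (Fin n)))
    (q : ℝ) (hq : 1 < q)
    (f : EuclideanSpace ℝ (Fin n) → ℝ)
    (a b : ℝ) (ha : 0 < a) (hb : 0 < b)
    (hgrad : ∀ x ∈ Ω, ‖gradient f x‖ ≤ a)
    (hdiv : ∀ φ : EuclideanSpace ℝ (Fin n) → ℝ, ContDiff ℝ (⊤ : ℕ∞) φ →
      HasCompactSupport φ → tsupport φ ⊆ Ω → (∀ x, 0 ≤ φ x) →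
      b * ∫ x in Ω, φ x ≤
        -∫ x in Ω, ‖gradient f x‖ ^ (q - 2) * ⟪gradient f x, gradient φ x⟫) :
    ∀ p : ℝ, 1 < p →
      ∀ v : EuclideanSpace ℝ (Fin n) → ℝ, ContDiff ℝ (⊤ : ℕ∞) v →
        HasCompactSupport v → tsupport v ⊆ Ω →
        b ^ p / (p ^ p * a ^ (p * (q - 1))) * ∫ x in Ω, |v x| ^ p ≤
          ∫ x in Ω, ‖gradient v x‖ ^ p := by
  intro p hp v hv hvK hvΩ
  have hα : 0 < a ^ (q - 1) := rpow_pos_of_pos ha _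
  have hcheeger : CheegerBound volume Ω (b / a ^ (q - 1)) := fun φ hφ hφK hφΩ hφ0 => by
    rw [div_mul_eq_mul_div, div_le_iff₀' hα]
    exact mul_setIntegral_le_mul_setIntegral_norm_gradient hq ha.le hgrad
      (hφ.of_le (by exact_mod_cast le_top)) hφK hφΩ (hdiv φ hφ hφK hφΩ hφ0)
  have hconst : b ^ p / (p ^ p * a ^ (p * (q - 1))) = (b / a ^ (q - 1) / p) ^ p := by
    rw [div_rpow (by positivity) (by linarith), div_rpow hb.le hα.le, ← rpow_mul ha.le,
      mul_comm (q - 1), div_div, mul_comm]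
  rw [hconst]
  exact rpow_mul_setIntegral_abs_rpow_le hcheeger (by positivity) hp hv hvK hvΩ

/-- Theorem 2.2: if `|∇f| ≤ a` on `Ω` and `Δ_q f ≥ b` in the weak sense, then
`λ_{1,p}(Ω) ≥ b^p / (p^p a^{p(q-1)})` for every `p > 1`. -/
theorem eigenvalue_lower_bound_gradient_bounded {n : ℕ}
    (Ω : Set (EuclideanSpace ℝ (Fin n))) (hne : Ω.Nonempty) (hΩ : IsOpen Ω)
    (q : ℝ) (hq : 1 < q)
    (f : EuclideanSpace ℝ (Fin n) → ℝ) (hf : ContDiff ℝ 1 f)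
    (a b : ℝ) (ha : 0 < a) (hb : 0 < b)
    (hgrad : ∀ x ∈ Ω, ‖gradient f x‖ ≤ a)
    (hdiv : ∀ φ : EuclideanSpace ℝ (Fin n) → ℝ, ContDiff ℝ (⊤ : ℕ∞) φ →
      HasCompactSupport φ → tsupport φ ⊆ Ω → (∀ x, 0 ≤ φ x) →
      b * ∫ x in Ω, φ x ≤
        -∫ x in Ω, ‖gradient f x‖ ^ (q - 2) * ⟪gradient f x, gradient φ x⟫) :
    ∀ p : ℝ, 1 < p →
      ∀ v : EuclideanSpace ℝ (Fin n) → ℝ, ContDiff ℝ (⊤ : ℕ∞) v →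
        HasCompactSupport v → tsupport v ⊆ Ω →
        b ^ p / (p ^ p * a ^ (p * (q - 1))) * ∫ x in Ω, |v x| ^ p ≤
          ∫ x in Ω, ‖gradient v x‖ ^ p :=
  eigenvalue_lower_bound_gradient_bounded_general Ω q hq f a b ha hb hgrad hdiv
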